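/- Let (πⁿ) be an increasing sequence of subdivisions of ℝ≥0 with mesh |πⁿ| ↓ 0, W a continuous path, Wⁿ its discretization along πⁿ (Wⁿ_t = W_{t_k^n} for t_k^n ≤ t < t_{k+1}^n), and (aⁿ) a sequence of reals decreasing to a. Set τ = inf{t > 0 : |W_t| > a} and τⁿ = min(inf{t ∈ (0,n] : |Wⁿ_t| > aⁿ}, n). Assume τ < ∞ and inf{t > 0 : |W_t| > a} = inf{t > 0 : |W_t| ≥ a}. Then τⁿ → τ. -/
import Mathlib


open Filter Set

/-- pathwise convergence of discretized hitting times.  `π n` is the `n`-th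
subdivision of `ℝ≥0` (increasing in `n`, mesh decreasing to `0`), `Wn n` the discretization
of the continuous path `W` along `π n`, `A n ↓ a` the levels, and the truncated hitting
times `τn` of `|Wn|` above `A n` converge to the hitting time `τ` of `|W|` above `a`. -/
theorem stmt_5 (W : ℝ → ℝ) (hW : Continuous W)
    (π : ℕ → ℕ → ℝ)
    (hπ0 : ∀ n, π n 0 = 0) (hπmono : ∀ n, StrictMono (π n))
    (hπtop : ∀ n, Tendsto (π n) atTop atTop)
    (hπincr : ∀ n, Set.range (π n) ⊆ Set.range (π (n + 1)))
    (δ : ℕ → ℝ) (hδanti : Antitone δ) (hδ0 : Tendsto δ atTop (nhds 0))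
    (hmesh : ∀ n k, π n (k + 1) - π n k ≤ δ n)
    (Wn : ℕ → ℝ → ℝ)
    (hWn : ∀ n k t, π n k ≤ t → t < π n (k + 1) → Wn n t = W (π n k))
    (A : ℕ → ℝ) (a : ℝ) (hAanti : Antitone A) (hAa : Tendsto A atTop (nhds a))
    (hne : {t : ℝ | 0 < t ∧ a < |W t|}.Nonempty)
    (hreg : sInf {t : ℝ | 0 < t ∧ a < |W t|} = sInf {t : ℝ | 0 < t ∧ a ≤ |W t|}) :
    Tendsto
      (fun n : ℕ =>
        sInf ({t : ℝ | t ∈ Set.Ioc (0 : ℝ) (n : ℝ) ∧ A n < |Wn n t|} ∪ {(n : ℝ)}))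
      atTop (nhds (sInf {t : ℝ | 0 < t ∧ a < |W t|})) := by
  classical
  have hSbdd : BddBelow {t : ℝ | 0 < t ∧ a < |W t|} := ⟨0, fun t ht => ht.1.le⟩
  have hAge : ∀ n, a ≤ A n := fun n => hAanti.le_of_tendsto hAa n
  -- existence of the left grid point
  have hgrid : ∀ n (t : ℝ), 0 ≤ t → ∃ k, π n k ≤ t ∧ t < π n (k + 1) := by
    intro n t ht
    have h1 : ∃ k, t < π n k := ((hπtop n).eventually_gt_atTop t).exists
    have hk0 : t < π n (Nat.find h1) := Nat.find_spec h1
    have hk0ne : Nat.find h1 ≠ 0 := by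
      intro h
      rw [h, hπ0] at hk0
      exact absurd ht (not_le.2 hk0)
    obtain ⟨k, hk⟩ := Nat.exists_eq_succ_of_ne_zero hk0ne
    refine ⟨k, not_lt.1 (Nat.find_min h1 ?_), by rw [hk] at hk0; exact hk0⟩
    omega
  -- every element of the discrete hitting set lies above τ
  have hkey : ∀ (n : ℕ) (t : ℝ), t ∈ Set.Ioc (0 : ℝ) (n : ℝ) → A n < |Wn n t| →
      sInf {t : ℝ | 0 < t ∧ a < |W t|} ≤ t := by
    intro n t ht hAt
    obtain ⟨k, hk1, hk2⟩ := hgrid n t ht.1.le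
    rw [hWn n k t hk1 hk2] at hAt
    have hnn : (0 : ℝ) ≤ π n k := by
      rw [← hπ0 n]; exact (hπmono n).monotone (Nat.zero_le k)
    rcases eq_or_lt_of_le hnn with h0 | hpos
    · -- grid point is 0; use continuity at 0
      rw [← h0] at hAt
      have h0mem : (0 : ℝ) ∈ {s | a < |W s|} := lt_of_le_of_lt (hAge n) hAt
      have hopen : IsOpen {s : ℝ | a < |W s|} := isOpen_lt continuous_const hW.abs
      obtain ⟨η, hη, hball⟩ := Metric.isOpen_iff.1 hopen 0 h0mem
      have hs0 : 0 < min (η / 2) t := lt_min (half_pos hη) ht.1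
      have hsball : min (η / 2) t ∈ Metric.ball (0 : ℝ) η := by
        rw [Metric.mem_ball, Real.dist_eq, sub_zero, abs_of_pos hs0]
        calc min (η / 2) t ≤ η / 2 := min_le_left _ _
          _ < η := by linarith
      have : sInf {t : ℝ | 0 < t ∧ a < |W t|} ≤ min (η / 2) t :=
        csInf_le hSbdd ⟨hs0, hball hsball⟩
      exact this.trans (min_le_right _ _)
    · have : sInf {t : ℝ | 0 < t ∧ a < |W t|} ≤ π n k := by
        rw [hreg]
        exact csInf_le ⟨0, fun x hx => hx.1.le⟩ ⟨hpos, (hAge n).trans hAt.le⟩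
      exact this.trans hk1
  rw [tendsto_order]
  constructor
  · -- lower bound
    intro b hb
    filter_upwards [tendsto_natCast_atTop_atTop.eventually_gt_atTop b] with n hn
    have hmin : min (sInf {t : ℝ | 0 < t ∧ a < |W t|}) (n : ℝ) ≤
        sInf ({t : ℝ | t ∈ Set.Ioc (0 : ℝ) (n : ℝ) ∧ A n < |Wn n t|} ∪ {(n : ℝ)}) := by
      refine le_csInf ⟨(n : ℝ), Or.inr rfl⟩ ?_
      rintro x (⟨hx1, hx2⟩ | hx)
      · exact (min_le_left _ _).trans (hkey n x hx1 hx2)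
      · rw [Set.mem_singleton_iff] at hx
        rw [hx]; exact min_le_right _ _
    exact lt_of_lt_of_le (lt_min hb hn) hmin
  · -- upper bound
    intro b hb
    obtain ⟨s, hsS, hsb⟩ := exists_lt_of_csInf_lt hne hb
    obtain ⟨hs0, hWs⟩ := hsS
    have hg : ∀ n, ∃ k, π n k ≤ s ∧ s < π n (k + 1) := fun n => hgrid n s hs0.le
    choose g hg1 hg2 using hg
    have hlow : ∀ n, s - δ n < π n (g n) := by
      intro n
      have h1 := hmesh n (g n)
      have h2 := hg2 n
      linarith
    have htend : Tendsto (fun n => π n (g n)) atTop (nhds s) := by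
      have h1 : Tendsto (fun n => s - δ n) atTop (nhds s) := by
        simpa using tendsto_const_nhds.sub hδ0
      exact tendsto_of_tendsto_of_tendsto_of_le_of_le h1 tendsto_const_nhds
        (fun n => (hlow n).le) (fun n => hg1 n)
    have hWtend : Tendsto (fun n => |W (π n (g n))|) atTop (nhds |W s|) :=
      ((hW.tendsto s).comp htend).abs
    filter_upwards [hAa.eventually_lt hWtend hWs,
      tendsto_natCast_atTop_atTop.eventually_ge_atTop s] with n h1 h2
    have hmem : s ∈ {t : ℝ | t ∈ Set.Ioc (0 : ℝ) (n : ℝ) ∧ A n < |Wn n t|} ∪ {(n : ℝ)} :=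
      Or.inl ⟨⟨hs0, h2⟩, by rw [hWn n (g n) s (hg1 n) (hg2 n)]; exact h1⟩
    have hbdd : BddBelow
        ({t : ℝ | t ∈ Set.Ioc (0 : ℝ) (n : ℝ) ∧ A n < |Wn n t|} ∪ {(n : ℝ)}) := by
      refine ⟨0, ?_⟩
      rintro x (⟨hx1, _⟩ | hx)
      · exact hx1.1.le
      · rw [Set.mem_singleton_iff] at hx
        rw [hx]; exact Nat.cast_nonneg n
    exact lt_of_le_of_lt (csInf_le hbdd hmem) hsb
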